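/- arXiv:2312.12944 — 5 statements merged into one kernel-verified Lean document; each statement's English description precedes it below -/
import Mathlib

section
/- Let G be a group and let d ≥ 1 be an integer. Then G is self-similar of index d if and only if G admits a simple virtual endomorphism of index d. -/
/-- An action of `G` on the rooted tree `X*` (encoded as a homomorphism into the
permutations of the set of words `List X`) is self-similar if it fixes the root
(the empty word) and for every `g` and every letter `x` there are `h` and `y`
with `g • (x·w) = y·(h • w)` for all words `w`. -/
def IsSelfSimilarAction {G : Type*} [Group G] {X : Type*}
    (ρ : G →* Equiv.Perm (List X)) : Prop :=
  (∀ g : G, ρ g [] = []) ∧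
    ∀ (g : G) (x : X), ∃ (h : G) (y : X), ∀ w : List X, ρ g (x :: w) = y :: ρ h w

/-- The action is transitive on the first level of the tree. -/
def IsFirstLevelTransitive {G : Type*} [Group G] {X : Type*}
    (ρ : G →* Equiv.Perm (List X)) : Prop :=
  ∀ x y : X, ∃ g : G, ρ g [x] = [y]

/-- A group `G` is self-similar of index `d` if it admits a faithful self-similar
action, transitive on the first level, on `X*` for an alphabet `X` with `|X| = d`. -/
def IsSelfSimilarOfIndex (G : Type*) [Group G] (d : ℕ) : Prop :=
  ∃ (X : Type) (_ : Fintype X), Nat.card X = d ∧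
    ∃ ρ : G →* Equiv.Perm (List X),
      Function.Injective ρ ∧ IsSelfSimilarAction ρ ∧ IsFirstLevelTransitive ρ

/-- A virtual endomorphism `φ : G₀ → G` (with `G₀` of finite index in `G`) is simple
if the only normal subgroup `N` of `G` with `N ≤ G₀` and `φ(N) ⊆ N` is trivial. -/
def IsSimpleVirtualEndo {G : Type*} [Group G] (G₀ : Subgroup G) (φ : G₀ →* G) : Prop :=
  ∀ N : Subgroup G, N.Normal → N ≤ G₀ →
    (∀ (g : G) (hg : g ∈ G₀), g ∈ N → φ ⟨g, hg⟩ ∈ N) → N = ⊥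

open scoped Classical

namespace SSConstr
variable {G : Type*} [Group G] (G₀ : Subgroup G) (φ : G₀ →* G)

noncomputable def sig (c : G ⧸ G₀) : G :=
  if c = QuotientGroup.mk 1 then 1 else c.out

lemma sig_mk (c : G ⧸ G₀) : QuotientGroup.mk (sig G₀ c) = c := by
  unfold sig; split
  · rename_i h; simpa using h.symm
  · exact QuotientGroup.out_eq' c

lemma sig_one : sig G₀ (QuotientGroup.mk 1) = 1 := if_pos rfl

lemma co_mem (g : G) (c : G ⧸ G₀) : (sig G₀ (g • c))⁻¹ * g * sig G₀ c ∈ G₀ := by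
  have h1 : (QuotientGroup.mk ((sig G₀ (g • c))) : G ⧸ G₀) = QuotientGroup.mk (g * sig G₀ c) := by
    rw [sig_mk]
    conv_lhs => rw [← sig_mk G₀ c]
    rfl
  have := QuotientGroup.eq.mp h1
  simpa [mul_assoc] using this

noncomputable def co (g : G) (c : G ⧸ G₀) : G₀ := ⟨_, co_mem G₀ g c⟩

noncomputable def act : List (G ⧸ G₀) → G → List (G ⧸ G₀)
  | [], _ => []
  | c :: w, g => (g • c) :: act w (φ (co G₀ g c))

lemma co_one (c : G ⧸ G₀) : co G₀ (1 : G) c = 1 := by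
  ext; simp [co, one_smul]

lemma act_one : ∀ w : List (G ⧸ G₀), act G₀ φ w 1 = w
  | [] => rfl
  | c :: w => by rw [act, co_one, map_one, act_one, one_smul]

lemma co_mul (g h : G) (c : G ⧸ G₀) :
    co G₀ (g * h) c = co G₀ g (h • c) * co G₀ h c := by
  ext; simp [co, mul_smul, mul_assoc]

lemma act_mul : ∀ (w : List (G ⧸ G₀)) (g h : G),
    act G₀ φ w (g * h) = act G₀ φ (act G₀ φ w h) g
  | [], _, _ => rfl
  | c :: w, g, h => by
    rw [act, act, act, mul_smul, co_mul, map_mul, act_mul]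

noncomputable def rho : G →* Equiv.Perm (List (G ⧸ G₀)) :=
  MonoidHom.mk' (fun g =>
    { toFun := fun w => act G₀ φ w g
      invFun := fun w => act G₀ φ w g⁻¹
      left_inv := fun w => by
        show act G₀ φ (act G₀ φ w g) g⁻¹ = w
        rw [← act_mul, inv_mul_cancel, act_one]
      right_inv := fun w => by
        show act G₀ φ (act G₀ φ w g⁻¹) g = w
        rw [← act_mul, mul_inv_cancel, act_one] })
    (fun g h => Equiv.ext fun w => act_mul G₀ φ w g h)

lemma rho_apply (g : G) (w : List (G ⧸ G₀)) : rho G₀ φ g w = act G₀ φ w g := rfl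

lemma rho_nil (g : G) : rho G₀ φ g [] = [] := rfl

lemma rho_cons (g : G) (c : G ⧸ G₀) (w : List (G ⧸ G₀)) :
    rho G₀ φ g (c :: w) = (g • c) :: rho G₀ φ (φ (co G₀ g c)) w := rfl

lemma rho_selfSimilar : IsSelfSimilarAction (rho G₀ φ) :=
  ⟨fun g => rfl, fun g c => ⟨φ (co G₀ g c), g • c, fun w => rfl⟩⟩

lemma rho_transitive : IsFirstLevelTransitive (rho G₀ φ) := by
  intro c c'
  refine ⟨sig G₀ c' * (sig G₀ c)⁻¹, ?_⟩
  have key : (sig G₀ c' * (sig G₀ c)⁻¹) • (QuotientGroup.mk (sig G₀ c) : G ⧸ G₀) = c' := by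
    show QuotientGroup.mk (sig G₀ c' * (sig G₀ c)⁻¹ * sig G₀ c) = c'
    rw [mul_assoc, inv_mul_cancel, mul_one, sig_mk]
  rw [sig_mk] at key
  have : (sig G₀ c' * (sig G₀ c)⁻¹) • c = c' := key
  rw [rho_cons, this, rho_nil]

lemma rho_injective (hsimp : IsSimpleVirtualEndo G₀ φ) :
    Function.Injective (rho G₀ φ) := by
  rw [← MonoidHom.ker_eq_bot_iff]
  set K := (rho G₀ φ).ker with hK
  have hmem : ∀ g ∈ K, ∀ w, rho G₀ φ g w = w := by
    intro g hg w
    rw [MonoidHom.mem_ker] at hg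
    rw [hg]; rfl
  have hKG₀ : K ≤ G₀ := by
    intro g hg
    have h1 := hmem g hg [QuotientGroup.mk 1]
    rw [rho_cons, rho_nil] at h1
    have h2 : (QuotientGroup.mk (g * 1) : G ⧸ G₀) = QuotientGroup.mk 1 :=
      List.head_eq_of_cons_eq h1
    have := QuotientGroup.eq.mp h2
    simpa using this
  apply hsimp K (rho G₀ φ).normal_ker hKG₀
  intro g hg hgK
  have hco : co G₀ g (QuotientGroup.mk 1) = ⟨g, hg⟩ := by
    have h1 := hmem g hgK [QuotientGroup.mk 1]
    rw [rho_cons, rho_nil] at h1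
    have h2 : g • (QuotientGroup.mk 1 : G ⧸ G₀) = QuotientGroup.mk 1 :=
      List.head_eq_of_cons_eq h1
    ext
    simp [co, h2, sig_one]
  rw [MonoidHom.mem_ker]
  apply Equiv.ext
  intro w
  have h3 := hmem g hgK (QuotientGroup.mk 1 :: w)
  rw [rho_cons] at h3
  have := List.tail_eq_of_cons_eq h3
  rw [hco] at this
  simpa using this

end SSConstr


/-- A group `G` is self-similar of index `d ≥ 1` if and only if `G` admits a simple
virtual endomorphism of index `d`. -/
theorem selfSimilar_iff_simple_virtual_endo (G : Type*) [Group G] (d : ℕ) (hd : 1 ≤ d) :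
    IsSelfSimilarOfIndex G d ↔
      ∃ (G₀ : Subgroup G) (φ : G₀ →* G), G₀.index = d ∧ IsSimpleVirtualEndo G₀ φ := by
  constructor
  · rintro ⟨X, _, hcardX, ρ, hinj, hss, htr⟩
    obtain ⟨hroot, hsec⟩ := hss
    choose sec lett hspec using hsec
    have h1 : ∀ (g : G) (x : X), ρ g [x] = [lett g x] := by
      intro g x
      have := hspec g x []
      rwa [hroot] at this
    have hXne : Nonempty X := (Nat.card_pos_iff.mp (by omega)).1
    obtain ⟨x₀⟩ := hXne
    let G₀ : Subgroup G :=
      { carrier := {g : G | ρ g [x₀] = [x₀]}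
        one_mem' := by simp
        mul_mem' := by
          intro a b ha hb
          simp only [Set.mem_setOf_eq] at *
          rw [map_mul, Equiv.Perm.mul_apply, hb, ha]
        inv_mem' := by
          intro a ha
          simp only [Set.mem_setOf_eq] at *
          conv_lhs => rw [← ha]
          rw [← Equiv.Perm.mul_apply, ← map_mul, inv_mul_cancel, map_one]
          rfl }
    have hG₀mem : ∀ g : G, g ∈ G₀ ↔ ρ g [x₀] = [x₀] := fun g => Iff.rfl
    have hlett₀ : ∀ g ∈ G₀, lett g x₀ = x₀ := by
      intro g hg
      exact List.head_eq_of_cons_eq ((h1 g x₀).symm.trans ((hG₀mem g).mp hg))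
    have hco : ∀ g g' : G,
        (QuotientGroup.mk g : G ⧸ G₀) = QuotientGroup.mk g' ↔ ρ g [x₀] = ρ g' [x₀] := by
      intro g g'
      rw [QuotientGroup.eq, hG₀mem]
      constructor
      · intro h
        have h2 : ρ g' [x₀] = ρ g (ρ (g⁻¹ * g') [x₀]) := by
          rw [← Equiv.Perm.mul_apply, ← map_mul, mul_inv_cancel_left]
        rw [h2, h]
      · intro h
        rw [map_mul, Equiv.Perm.mul_apply, ← h, ← Equiv.Perm.mul_apply, ← map_mul,
          inv_mul_cancel, map_one]
        rfl
    -- index computation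
    have hFbij : Function.Bijective (fun c : G ⧸ G₀ => lett c.out x₀) := by
      constructor
      · intro c c' hcc
        have h2 : ρ c.out [x₀] = ρ c'.out [x₀] := by
          simp only at hcc
          rw [h1, h1, hcc]
        have h3 := (hco c.out c'.out).mpr h2
        rwa [QuotientGroup.out_eq', QuotientGroup.out_eq'] at h3
      · intro y
        obtain ⟨g, hg⟩ := htr x₀ y
        refine ⟨QuotientGroup.mk g, ?_⟩
        have h2 : (QuotientGroup.mk ((QuotientGroup.mk g : G ⧸ G₀)).out : G ⧸ G₀)
            = QuotientGroup.mk g := QuotientGroup.out_eq' _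
        have h3 := (hco _ _).mp h2
        rw [hg, h1] at h3
        exact List.head_eq_of_cons_eq h3
    have hindex : G₀.index = d := by
      have h2 : Nat.card (G ⧸ G₀) = Nat.card X := Nat.card_congr (Equiv.ofBijective _ hFbij)
      rw [Subgroup.index, h2, hcardX]
    -- the virtual endomorphism
    have hmul : ∀ a b : G₀, sec ((a : G) * (b : G)) x₀ = sec (a : G) x₀ * sec (b : G) x₀ := by
      intro a b
      apply hinj
      apply Equiv.ext
      intro w
      have e1 := hspec ((a : G) * (b : G)) x₀ w
      have e2 : ρ ((a : G) * (b : G)) (x₀ :: w)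
          = lett (a : G) x₀ :: ρ (sec (a : G) x₀) (ρ (sec (b : G) x₀) w) := by
        rw [map_mul, Equiv.Perm.mul_apply, hspec (b : G) x₀ w, hlett₀ _ b.2,
          hspec (a : G) x₀ _]
      have h3 := List.tail_eq_of_cons_eq (e1.symm.trans e2)
      rw [map_mul, Equiv.Perm.mul_apply]
      exact h3
    let φ : G₀ →* G := MonoidHom.mk' (fun g : G₀ => sec (g : G) x₀) (fun a b => hmul a b)
    refine ⟨G₀, φ, hindex, ?_⟩
    intro N hN hle hinvar
    have hlen : ∀ (w : List X) (g : G), (ρ g w).length = w.length := by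
      intro w
      induction w with
      | nil => intro g; rw [hroot]
      | cons x w ih => intro g; rw [hspec]; simp [ih]
    have main : ∀ (k : ℕ) (w : List X), w.length = k → ∀ n ∈ N, ρ n w = w := by
      intro k
      induction k with
      | zero =>
        intro w hw n hn
        rw [List.length_eq_zero_iff] at hw
        rw [hw, hroot]
      | succ k ih =>
        intro w hw n hn
        cases w with
        | nil => simp at hw
        | cons x w' =>
          simp only [List.length_cons, Nat.succ_inj] at hw
          obtain ⟨t, ht⟩ := htr x₀ x
          have hltx : lett t x₀ = x := List.head_eq_of_cons_eq ((h1 t x₀).symm.trans ht)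
          have hmN : t⁻¹ * n * t ∈ N := by
            have h4 := hN.conj_mem n hn t⁻¹
            simpa [mul_assoc] using h4
          have hmG₀ : t⁻¹ * n * t ∈ G₀ := hle hmN
          set v := (ρ (sec t x₀)).symm w' with hvdef
          have hv : ρ (sec t x₀) v = w' := Equiv.apply_symm_apply _ _
          have hvlen : v.length = k := by
            have h5 := hlen v (sec t x₀)
            rw [hv] at h5
            omega
          have hsecN : sec (t⁻¹ * n * t) x₀ ∈ N := hinvar _ hmG₀ hmN
          have hstep : ρ (t⁻¹ * n * t) (x₀ :: v) = x₀ :: v := by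
            rw [hspec, hlett₀ _ hmG₀, ih v hvlen _ hsecN]
          calc ρ n (x :: w')
              = ρ n (ρ t (x₀ :: v)) := by rw [hspec t x₀ v, hltx, hv]
            _ = ρ t (ρ (t⁻¹ * n * t) (x₀ :: v)) := by
                rw [← Equiv.Perm.mul_apply, ← Equiv.Perm.mul_apply, ← map_mul, ← map_mul]
                congr 1
                group
            _ = ρ t (x₀ :: v) := by rw [hstep]
            _ = x :: w' := by rw [hspec t x₀ v, hltx, hv]
    apply (Subgroup.eq_bot_iff_forall N).mpr
    intro n hn
    apply hinj
    rw [map_one]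
    apply Equiv.ext
    intro w
    rw [main w.length w rfl n hn]
    rfl
  · rintro ⟨G₀, φ, hind, hsimp⟩
    have hcard : Nat.card (G ⧸ G₀) = d := hind
    have hfin : Finite (G ⧸ G₀) := (Nat.card_pos_iff.mp (by omega)).2
    let e : (G ⧸ G₀) ≃ Fin d := (Finite.equivFin _).trans (finCongr hcard)
    let E : List (G ⧸ G₀) ≃ List (Fin d) := Equiv.listEquivOfEquiv e
    set ρ := SSConstr.rho G₀ φ with hρ
    have hρinj : Function.Injective ρ := SSConstr.rho_injective G₀ φ hsimp
    have hρss : IsSelfSimilarAction ρ := SSConstr.rho_selfSimilar G₀ φ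
    have hρtr : IsFirstLevelTransitive ρ := SSConstr.rho_transitive G₀ φ
    let ρ' : G →* Equiv.Perm (List (Fin d)) :=
      MonoidHom.mk' (fun g => (E.symm.trans (ρ g)).trans E)
        (fun g h => by
          apply Equiv.ext
          intro w
          simp [Equiv.Perm.mul_apply, map_mul])
    have hρ'apply : ∀ (g : G) (w : List (Fin d)), ρ' g w = E (ρ g (E.symm w)) := fun _ _ => rfl
    refine ⟨Fin d, inferInstance, by simp, ρ', ?_, ⟨?_, ?_⟩, ?_⟩
    · intro g h hgh
      apply hρinj
      apply Equiv.ext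
      intro w
      have := congrArg (fun p : Equiv.Perm (List (Fin d)) => E.symm (p (E w))) hgh
      simpa [hρ'apply] using this
    · intro g
      have hnil : E.symm ([] : List (Fin d)) = [] := rfl
      rw [hρ'apply, hnil, hρss.1]
      rfl
    · intro g x
      obtain ⟨h, y, hy⟩ := hρss.2 g (e.symm x)
      refine ⟨h, e y, fun w => ?_⟩
      have hsymm : E.symm (x :: w) = e.symm x :: E.symm w := rfl
      rw [hρ'apply, hsymm, hy]
      show e y :: E (ρ h (E.symm w)) = _
      rw [hρ'apply]
    · intro x y
      obtain ⟨g, hg⟩ := hρtr (e.symm x) (e.symm y)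
      refine ⟨g, ?_⟩
      have hsymm : E.symm ([x] : List (Fin d)) = [e.symm x] := rfl
      rw [hρ'apply, hsymm, hg]
      show [e (e.symm y)] = [y]
      simp
end

section
/- Suppose a group G admits a faithful self-similar action on X^*, transitive on the first level, over a finite alphabet X with |X| = d. Then G admits a simple virtual endomorphism of index d; specifically, for a fixed letter x₀ ∈ X, the stabilizer G₀ of the one-letter word (x₀) has index d in G, and the map G₀ → G sending g to the unique h ∈ G with g • (x₀·w) = x₀·(h • w) for all w ∈ X^* is a simple virtual endomorphism. -/
abbrev letterStabilizer {G : Type*} [Group G] {X : Type*} (ρ : G →* Equiv.Perm (List X))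
    (x₀ : X) : Subgroup G :=
  Subgroup.comap ρ (MulAction.stabilizer (Equiv.Perm (List X)) ([x₀] : List X))

namespace IsSelfSimilarAction

variable {G : Type*} [Group G] {X : Type*} {ρ : G →* Equiv.Perm (List X)}

theorem exists_apply_singleton (hss : IsSelfSimilarAction ρ) (g : G) (x : X) :
    ∃ y, ρ g [x] = [y] := by
  obtain ⟨h, y, hy⟩ := hss.2 g x
  exact ⟨y, by rw [hy, hss.1 h]⟩

theorem exists_apply_cons_of_apply_singleton (hss : IsSelfSimilarAction ρ) {g : G} {x y : X}
    (hg : ρ g [x] = [y]) : ∃ h : G, ∀ w, ρ g (x :: w) = y :: ρ h w := by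
  obtain ⟨h, y', hy'⟩ := hss.2 g x
  have hyy' : y' = y := by simpa [hss.1 h] using (hy' []).symm.trans hg
  exact ⟨h, hyy' ▸ hy'⟩

theorem exists_apply_cons_eq_cons (hss : IsSelfSimilarAction ρ) (htr : IsFirstLevelTransitive ρ)
    (x₀ x : X) (w : List X) : ∃ g h : G, ρ g (x₀ :: ρ h w) = x :: w := by
  obtain ⟨g, hg⟩ := htr x₀ x
  obtain ⟨h, hh⟩ := hss.exists_apply_cons_of_apply_singleton hg
  exact ⟨g, h⁻¹, by rw [hh, map_inv, Equiv.Perm.coe_inv, Equiv.apply_symm_apply]⟩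

theorem index_letterStabilizer (hss : IsSelfSimilarAction ρ) (htr : IsFirstLevelTransitive ρ)
    (x₀ : X) : (letterStabilizer ρ x₀).index = Nat.card X := by
  let _ : MulAction G (List X) := MulAction.compHom _ ρ
  have horbit : MulAction.orbit G [x₀] = Set.range fun y : X => [y] := by
    ext w
    constructor
    · rintro ⟨g, rfl⟩
      obtain ⟨y, hy⟩ := hss.exists_apply_singleton g x₀
      exact ⟨y, hy.symm⟩
    · rintro ⟨y, rfl⟩
      exact htr x₀ y
  calc (letterStabilizer ρ x₀).index = (MulAction.stabilizer G [x₀]).index := rfl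
    _ = (MulAction.orbit G [x₀]).ncard := MulAction.index_stabilizer G _
    _ = Nat.card X := by
      rw [horbit, Set.ncard_range_of_injective List.singleton_injective]

noncomputable def restriction (hss : IsSelfSimilarAction ρ) (x₀ : X)
    (g : letterStabilizer ρ x₀) : G :=
  (hss.exists_apply_cons_of_apply_singleton g.2).choose

theorem restriction_spec (hss : IsSelfSimilarAction ρ) (x₀ : X) (g : letterStabilizer ρ x₀)
    (w : List X) : ρ g (x₀ :: w) = x₀ :: ρ (hss.restriction x₀ g) w :=
  (hss.exists_apply_cons_of_apply_singleton g.2).choose_spec w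

theorem restriction_mul (hss : IsSelfSimilarAction ρ) (hfaith : Function.Injective ρ) (x₀ : X)
    (g₁ g₂ : letterStabilizer ρ x₀) :
    hss.restriction x₀ (g₁ * g₂) = hss.restriction x₀ g₁ * hss.restriction x₀ g₂ := by
  refine hfaith (Equiv.ext fun w => List.cons_injective (a := x₀) ?_)
  rw [← hss.restriction_spec, Subgroup.coe_mul, map_mul, map_mul, Equiv.Perm.mul_apply,
    Equiv.Perm.mul_apply, hss.restriction_spec, hss.restriction_spec]

noncomputable def restrictionHom (hss : IsSelfSimilarAction ρ) (hfaith : Function.Injective ρ)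
    (x₀ : X) : letterStabilizer ρ x₀ →* G :=
  MonoidHom.mk' (hss.restriction x₀) (hss.restriction_mul hfaith x₀)

theorem isSimpleVirtualEndo_of_apply_cons (hss : IsSelfSimilarAction ρ)
    (htr : IsFirstLevelTransitive ρ) (hfaith : Function.Injective ρ) {x₀ : X}
    {φ : letterStabilizer ρ x₀ →* G} (hφ : ∀ (g : letterStabilizer ρ x₀) (w : List X),
      ρ g (x₀ :: w) = x₀ :: ρ (φ g) w) :
    IsSimpleVirtualEndo (letterStabilizer ρ x₀) φ := by
  intro N hN hNle hNφ
  let S : Set (List X) := {w | ∀ n ∈ N, ρ n w = w}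
  have hS_apply : ∀ (g : G), ∀ w ∈ S, ρ g w ∈ S := by
    intro g w hw n hn
    have hconj : ρ (g⁻¹ * n * g) w = w := hw _ (by simpa using hN.conj_mem n hn g⁻¹)
    rw [map_mul, map_mul, Equiv.Perm.mul_apply, Equiv.Perm.mul_apply, map_inv,
      Equiv.Perm.inv_eq_iff_eq] at hconj
    exact hconj
  have hS_cons : ∀ v ∈ S, x₀ :: v ∈ S := fun v hv n hn => by
    rw [show n = (⟨n, hNle hn⟩ : letterStabilizer ρ x₀) from rfl, hφ, hv _ (hNφ n _ hn)]
  have hS : ∀ w, w ∈ S := by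
    intro w
    induction w with
    | nil => exact fun n _ => hss.1 n
    | cons x w ih =>
      obtain ⟨g, h, hgh⟩ := hss.exists_apply_cons_eq_cons htr x₀ x w
      exact hgh ▸ hS_apply g _ (hS_cons _ (hS_apply h w ih))
  exact eq_bot_iff.mpr fun n hn => hfaith (Equiv.ext fun w => by simpa using hS w n hn)

end IsSelfSimilarAction

theorem simple_virtual_endo_of_selfSimilar_general {G : Type*} [Group G] {X : Type}
    (d : ℕ) (ρ : G →* Equiv.Perm (List X)) (hfaith : Function.Injective ρ)
    (hss : IsSelfSimilarAction ρ) (htr : IsFirstLevelTransitive ρ)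
    (hcard : Nat.card X = d) (x₀ : X) :
    (Subgroup.comap ρ (MulAction.stabilizer (Equiv.Perm (List X)) ([x₀] : List X))).index = d ∧
      ∃ φ : ↥(Subgroup.comap ρ (MulAction.stabilizer (Equiv.Perm (List X)) ([x₀] : List X))) →* G,
        (∀ g : ↥(Subgroup.comap ρ (MulAction.stabilizer (Equiv.Perm (List X)) ([x₀] : List X))),
          ∀ w : List X, ρ (g : G) (x₀ :: w) = x₀ :: ρ (φ g) w) ∧
        IsSimpleVirtualEndo
          (Subgroup.comap ρ (MulAction.stabilizer (Equiv.Perm (List X)) ([x₀] : List X))) φ :=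
  ⟨hcard ▸ hss.index_letterStabilizer htr x₀, hss.restrictionHom hfaith x₀,
    hss.restriction_spec x₀,
    hss.isSimpleVirtualEndo_of_apply_cons htr hfaith (hss.restriction_spec x₀)⟩

/-- If `G` has a faithful self-similar action, transitive on the first level, on `X*`
with `|X| = d`, then for a fixed letter `x₀` the stabilizer `G₀` of the one-letter
word `[x₀]` has index `d`, and the map `G₀ → G` sending `g` to the unique `h` with
`g • (x₀·w) = x₀·(h • w)` for all `w` is a simple virtual endomorphism of index `d`. -/
theorem simple_virtual_endo_of_selfSimilar {G : Type*} [Group G] {X : Type} [Fintype X]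
    (d : ℕ) (ρ : G →* Equiv.Perm (List X)) (hfaith : Function.Injective ρ)
    (hss : IsSelfSimilarAction ρ) (htr : IsFirstLevelTransitive ρ)
    (hcard : Nat.card X = d) (x₀ : X) :
    (Subgroup.comap ρ (MulAction.stabilizer (Equiv.Perm (List X)) ([x₀] : List X))).index = d ∧
      ∃ φ : ↥(Subgroup.comap ρ (MulAction.stabilizer (Equiv.Perm (List X)) ([x₀] : List X))) →* G,
        (∀ g : ↥(Subgroup.comap ρ (MulAction.stabilizer (Equiv.Perm (List X)) ([x₀] : List X))),
          ∀ w : List X, ρ (g : G) (x₀ :: w) = x₀ :: ρ (φ g) w) ∧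
        IsSimpleVirtualEndo
          (Subgroup.comap ρ (MulAction.stabilizer (Equiv.Perm (List X)) ([x₀] : List X))) φ :=
  simple_virtual_endo_of_selfSimilar_general d ρ hfaith hss htr hcard x₀
end

section
/- Let G be a group admitting a simple virtual endomorphism φ : G₀ → G of index d ≥ 1. Then G is self-similar of index d, i.e. G admits a faithful self-similar action, transitive on the first level, on the rooted tree X^* over an alphabet X with |X| = d. -/
namespace SSVE
variable {G : Type*} [Group G] {d : ℕ} {G₀ : Subgroup G}
variable (φ : G₀ →* G) (c : G → Fin d) (s : Fin d → G)
  (hcs : ∀ i, c (s i) = i) (hc : ∀ a b, c a = c b ↔ a⁻¹ * b ∈ G₀)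

def elt (g : G) (x : Fin d) : G₀ :=
  ⟨(s (c (g * s x)))⁻¹ * (g * s x), (hc _ _).mp (hcs _)⟩

def ssAct : List (Fin d) → G → List (Fin d)
  | [], _ => []
  | x :: w, g => c (g * s x) :: ssAct w (φ (elt c s hcs hc g x))

lemma ssAct_cons (x : Fin d) (w : List (Fin d)) (g : G) :
    ssAct φ c s hcs hc (x :: w) g
      = c (g * s x) :: ssAct φ c s hcs hc w (φ (elt c s hcs hc g x)) := rfl

lemma elt_one (x : Fin d) : elt c s hcs hc (1 : G) x = 1 := by
  ext; simp [elt, hcs]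

lemma ssAct_one : ∀ w : List (Fin d), ssAct φ c s hcs hc w 1 = w
  | [] => rfl
  | x :: w => by
      rw [ssAct_cons, elt_one, map_one, ssAct_one, one_mul, hcs]

lemma elt_mul (g h : G) (x : Fin d) :
    elt c s hcs hc (g * h) x
      = elt c s hcs hc g (c (h * s x)) * elt c s hcs hc h x := by
  have hy : c (g * s (c (h * s x))) = c (g * h * s x) := by
    rw [hc]
    have := (hc (s (c (h * s x))) (h * s x)).mp (hcs _)
    simpa [mul_assoc, mul_inv_rev] using this
  ext
  simp only [elt, Subgroup.coe_mul, hy]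
  group

lemma ssAct_mul : ∀ (w : List (Fin d)) (g h : G),
    ssAct φ c s hcs hc w (g * h) = ssAct φ c s hcs hc (ssAct φ c s hcs hc w h) g
  | [], _, _ => rfl
  | x :: w, g, h => by
      have hy : c (g * s (c (h * s x))) = c (g * h * s x) := by
        rw [hc]
        have := (hc (s (c (h * s x))) (h * s x)).mp (hcs _)
        simpa [mul_assoc, mul_inv_rev] using this
      rw [ssAct_cons, ssAct_cons, ssAct_cons, hy, elt_mul, map_mul, ssAct_mul w]

def ssHom : G →* Equiv.Perm (List (Fin d)) where
  toFun g :=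
    { toFun := fun w => ssAct φ c s hcs hc w g
      invFun := fun w => ssAct φ c s hcs hc w g⁻¹
      left_inv := fun w => by
        show ssAct φ c s hcs hc (ssAct φ c s hcs hc w _) _ = w
        rw [← ssAct_mul, inv_mul_cancel, ssAct_one]
      right_inv := fun w => by
        show ssAct φ c s hcs hc (ssAct φ c s hcs hc w _) _ = w
        rw [← ssAct_mul, mul_inv_cancel, ssAct_one] }
  map_one' := Equiv.ext fun w => ssAct_one φ c s hcs hc w
  map_mul' g h := Equiv.ext fun w => ssAct_mul φ c s hcs hc w g h

lemma ssHom_apply (g : G) (w : List (Fin d)) :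
    ssHom φ c s hcs hc g w = ssAct φ c s hcs hc w g := rfl

/-- The kernel of the action, as a subgroup. -/
def ssK : Subgroup G where
  carrier := {g | ∀ w : List (Fin d), ssAct φ c s hcs hc w g = w}
  one_mem' := fun w => ssAct_one φ c s hcs hc w
  mul_mem' := fun {a b} ha hb w => by rw [ssAct_mul, hb w, ha w]
  inv_mem' := fun {a} ha w => by
    calc ssAct φ c s hcs hc w a⁻¹
        = ssAct φ c s hcs hc (ssAct φ c s hcs hc w a) a⁻¹ := by rw [ha w]
      _ = ssAct φ c s hcs hc w (a⁻¹ * a) := (ssAct_mul φ c s hcs hc w a⁻¹ a).symm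
      _ = w := by rw [inv_mul_cancel, ssAct_one]

lemma mem_ssK (g : G) : g ∈ ssK φ c s hcs hc ↔ ∀ w, ssAct φ c s hcs hc w g = w := Iff.rfl

lemma ssK_normal : (ssK φ c s hcs hc).Normal := by
  constructor
  intro n hn g w
  rw [ssAct_mul, ssAct_mul, hn, ← ssAct_mul, mul_inv_cancel, ssAct_one]

end SSVE

open SSVE in
/-- If `G` admits a simple virtual endomorphism `φ : G₀ → G` of index `d ≥ 1`, then `G`
is self-similar of index `d`. -/
theorem selfSimilar_of_simple_virtual_endo {G : Type*} [Group G] (d : ℕ) (hd : 1 ≤ d)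
    (G₀ : Subgroup G) (φ : G₀ →* G) (hind : G₀.index = d)
    (hsimple : IsSimpleVirtualEndo G₀ φ) :
    IsSelfSimilarOfIndex G d := by
  classical
  have hfin : Finite (G ⧸ G₀) := Nat.finite_of_card_ne_zero (by
    show G₀.index ≠ 0
    omega)
  letI : Fintype (G ⧸ G₀) := Fintype.ofFinite _
  have hcard : Fintype.card (G ⧸ G₀) = d := by
    rw [← Nat.card_eq_fintype_card]; exact hind
  let e := Fintype.equivFinOfCardEq hcard
  set c : G → Fin d := fun g => e (QuotientGroup.mk g) with hcdef
  set t : G ⧸ G₀ → G := fun q =>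
    if q = QuotientGroup.mk 1 then 1 else Quotient.out q with htdef
  set s : Fin d → G := fun i => t (e.symm i) with hsdef
  have hmk : ∀ q : G ⧸ G₀, QuotientGroup.mk (t q) = q := by
    intro q
    by_cases h : q = QuotientGroup.mk 1
    · simp [htdef, h]
    · simp [htdef, h, Quotient.out_eq]
  have hcs : ∀ i, c (s i) = i := by
    intro i; simp [hcdef, hsdef, hmk]
  have hc : ∀ a b : G, c a = c b ↔ a⁻¹ * b ∈ G₀ := by
    intro a b
    rw [hcdef]
    simp only [EmbeddingLike.apply_eq_iff_eq]
    exact QuotientGroup.eq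
  have hs1 : s (c 1) = 1 := by
    simp [hcdef, hsdef, htdef]
  -- the kernel of the action is trivial
  have hKbot : ssK φ c s hcs hc = ⊥ := by
    apply hsimple _ (ssK_normal φ c s hcs hc)
    · intro g hg
      have h1 := hg [c 1]
      rw [ssAct_cons] at h1
      simp only [ssAct, hs1, mul_one] at h1
      have h2 : c g = c 1 := by simpa using h1
      have h3 := (hc g 1).mp h2
      simpa using G₀.inv_mem h3
    · intro g hg0 hgK w
      have hcg : c g = c 1 := (hc g 1).mpr (by simpa using G₀.inv_mem hg0)
      have hel : elt c s hcs hc g (c 1) = ⟨g, hg0⟩ := by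
        ext; simp [elt, hs1, hcg]
      have h1 := hgK (c 1 :: w)
      rw [ssAct_cons, hel] at h1
      injection h1
  refine ⟨Fin d, inferInstance, by simp, ssHom φ c s hcs hc, ?_, ?_, ?_⟩
  · -- injectivity
    intro a b hab
    have hmem : a⁻¹ * b ∈ ssK φ c s hcs hc := by
      intro w
      have happ : ∀ v : List (Fin d), ssAct φ c s hcs hc v a = ssAct φ c s hcs hc v b := by
        intro v
        have := congrArg (fun p : Equiv.Perm (List (Fin d)) => p v) hab
        simpa [ssHom_apply] using this
      rw [ssAct_mul, ← happ, ← ssAct_mul, inv_mul_cancel, ssAct_one]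
    rw [hKbot, Subgroup.mem_bot, inv_mul_eq_one] at hmem
    exact hmem
  · -- self-similar
    refine ⟨fun g => rfl, fun g x => ⟨φ (elt c s hcs hc g x), c (g * s x), fun w => rfl⟩⟩
  · -- first-level transitive
    intro x y
    refine ⟨s y * (s x)⁻¹, ?_⟩
    show ssAct φ c s hcs hc [x] (s y * (s x)⁻¹) = [y]
    rw [ssAct_cons]
    simp [ssAct, inv_mul_cancel_right, hcs]
end

section
/- Let G be a residually finite group with finite center. Then G is self-similar of some index d ≥ 1 if and only if G admits an almost simple virtual endomorphism. -/
section TreeAux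
variable {G : Type*} [Group G] (H : Subgroup G) (ψ : H →* G)

open scoped Classical in
/-- Coset representatives, with the trivial coset represented by `1`. -/
noncomputable def repAux (q : G ⧸ H) : G := if q = ((1 : G) : G ⧸ H) then 1 else q.out

lemma repAux_spec (q : G ⧸ H) : QuotientGroup.mk (repAux H q) = q := by
  unfold repAux
  split
  · rename_i h; rw [h]
  · exact QuotientGroup.out_eq' q

lemma repAux_one : repAux H ((1 : G) : G ⧸ H) = 1 := by simp [repAux]

/-- The section cocycle. -/
noncomputable def secAux (g : G) (q : G ⧸ H) : G := (repAux H (g • q))⁻¹ * g * repAux H q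

lemma smul_mk_aux (g a : G) : g • (QuotientGroup.mk a : G ⧸ H) = QuotientGroup.mk (g * a) := rfl

lemma secAux_mem (g : G) (q : G ⧸ H) : secAux H g q ∈ H := by
  have h2 : (QuotientGroup.mk (repAux H (g • q)) : G ⧸ H) = QuotientGroup.mk (g * repAux H q) := by
    rw [repAux_spec, ← smul_mk_aux, repAux_spec]
  have := QuotientGroup.eq.mp h2
  simpa [secAux, mul_assoc] using this

lemma secAux_one (q : G ⧸ H) : secAux H 1 q = 1 := by
  simp [secAux]

lemma secAux_cocycle (g g' : G) (q : G ⧸ H) :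
    secAux H (g * g') q = secAux H g (g' • q) * secAux H g' q := by
  simp only [secAux, mul_smul]
  group

/-- The recursively defined action on words. -/
noncomputable def actAux : G → List (G ⧸ H) → List (G ⧸ H)
  | _, [] => []
  | g, q :: w => (g • q) :: actAux (ψ ⟨secAux H g q, secAux_mem H g q⟩) w

@[simp] lemma actAux_nil (g : G) : actAux H ψ g [] = [] := rfl

lemma actAux_cons (g : G) (q : G ⧸ H) (w : List (G ⧸ H)) :
    actAux H ψ g (q :: w) = (g • q) :: actAux H ψ (ψ ⟨secAux H g q, secAux_mem H g q⟩) w := rfl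

lemma actAux_one (w : List (G ⧸ H)) : actAux H ψ 1 w = w := by
  induction w with
  | nil => rfl
  | cons q w ih =>
    rw [actAux_cons]
    have : (⟨secAux H 1 q, secAux_mem H 1 q⟩ : H) = 1 := by
      ext; simp [secAux_one]
    rw [this, map_one, one_smul]
    exact congrArg _ ih

lemma actAux_mul (g g' : G) (w : List (G ⧸ H)) :
    actAux H ψ (g * g') w = actAux H ψ g (actAux H ψ g' w) := by
  induction w generalizing g g' with
  | nil => rfl
  | cons q w ih =>
    rw [actAux_cons, actAux_cons, actAux_cons, mul_smul]
    refine congrArg _ ?_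
    have : (⟨secAux H (g * g') q, secAux_mem H (g * g') q⟩ : H) =
        ⟨secAux H g (g' • q), secAux_mem H g (g' • q)⟩ * ⟨secAux H g' q, secAux_mem H g' q⟩ := by
      ext; simp [secAux_cocycle]
    rw [this, map_mul]
    exact ih _ _

/-- The tree action associated to a virtual endomorphism. -/
noncomputable def treePerm : G →* Equiv.Perm (List (G ⧸ H)) where
  toFun g :=
    { toFun := actAux H ψ g
      invFun := actAux H ψ g⁻¹
      left_inv := fun w => by rw [← actAux_mul, inv_mul_cancel, actAux_one]
      right_inv := fun w => by rw [← actAux_mul, mul_inv_cancel, actAux_one] }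
  map_one' := by ext w; simp [actAux_one]
  map_mul' g g' := by ext w; simp [actAux_mul]

lemma treePerm_apply (g : G) (w : List (G ⧸ H)) : treePerm H ψ g w = actAux H ψ g w := rfl

end TreeAux

/-- A virtual endomorphism `φ : G₀ → G` is almost simple if every normal subgroup `N`
of `G` with `N ≤ G₀` and `φ(N) ⊆ N` is contained in the center of `G`. -/
def IsAlmostSimpleVirtualEndo {G : Type*} [Group G] (G₀ : Subgroup G) (φ : G₀ →* G) : Prop :=
  ∀ N : Subgroup G, N.Normal → N ≤ G₀ →
    (∀ (g : G) (hg : g ∈ G₀), g ∈ N → φ ⟨g, hg⟩ ∈ N) → N ≤ Subgroup.center G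

/-- A group is residually finite if every nontrivial element avoids some normal subgroup
of finite index. -/
def ResiduallyFinite (G : Type*) [Group G] : Prop :=
  ∀ g : G, g ≠ 1 → ∃ N : Subgroup G, N.Normal ∧ N.index ≠ 0 ∧ g ∉ N

/-- A residually finite group with finite center is self-similar (of some index `d ≥ 1`)
if and only if it admits an almost simple virtual endomorphism. -/
theorem selfSimilar_iff_almost_simple_virtual_endo (G : Type*) [Group G]
    (hrf : ResiduallyFinite G) (hZ : Finite (Subgroup.center G)) :
    (∃ d : ℕ, 1 ≤ d ∧ IsSelfSimilarOfIndex G d) ↔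
      ∃ (G₀ : Subgroup G) (φ : G₀ →* G), G₀.index ≠ 0 ∧ IsAlmostSimpleVirtualEndo G₀ φ := by
  constructor
  · -- Forward: a self-similar structure yields an almost simple virtual endomorphism.
    rintro ⟨d, hd, X, _, hcard, ρ, hinj, ⟨hnil, hsec⟩, htr⟩
    have hpos : 0 < Nat.card X := hcard ▸ hd
    obtain ⟨⟨x₀⟩, _⟩ := Nat.card_pos_iff.mp hpos
    choose σ μ hσμ using hsec
    have key : ∀ (g : G) (x : X), ρ g [x] = [μ g x] := fun g x => by
      have := hσμ g x []; rwa [hnil] at this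
    have μcomp : ∀ (g h : G) (x : X), μ (g * h) x = μ g (μ h x) := by
      intro g h x
      have h2 : ρ (g * h) [x] = ρ g (ρ h [x]) := by rw [map_mul]; rfl
      rw [key, key h x, key g (μ h x)] at h2
      simpa using h2
    have μone : ∀ x : X, μ 1 x = x := by
      intro x
      have h1 := key 1 x
      rw [map_one] at h1
      simpa using h1.symm
    have μinv : ∀ (g : G) (x : X), μ g⁻¹ (μ g x) = x := by
      intro g x
      have := μcomp g⁻¹ g x
      rw [inv_mul_cancel, μone] at this
      exact this.symm
    have σuniq : ∀ (g : G) (x : X) (h : G),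
        (∀ w, ρ g (x :: w) = μ g x :: ρ h w) → h = σ g x := by
      intro g x h hw
      apply hinj
      apply Equiv.ext
      intro w
      have h1 := (hw w).symm.trans (hσμ g x w)
      simpa using h1
    have σcoc : ∀ (g h : G) (x : X), σ (g * h) x = σ g (μ h x) * σ h x := by
      intro g h x
      refine (σuniq (g * h) x _ ?_).symm
      intro w
      have h2 : ρ (g * h) (x :: w) = ρ g (ρ h (x :: w)) := by rw [map_mul]; rfl
      rw [h2, hσμ h x, hσμ g (μ h x), μcomp, map_mul]
      rfl
    have σone : ∀ x : X, σ 1 x = 1 := by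
      intro x
      refine (σuniq 1 x 1 ?_).symm
      intro w
      simp [μone]
    -- the subgroup and the virtual endomorphism
    let G₀ : Subgroup G :=
      { carrier := {g : G | μ g x₀ = x₀}
        one_mem' := μone x₀
        mul_mem' := by
          intro a b ha hb
          simp only [Set.mem_setOf_eq] at *
          rw [μcomp, hb, ha]
        inv_mem' := by
          intro a ha
          simp only [Set.mem_setOf_eq] at *
          conv_lhs => rw [← ha]
          exact μinv a x₀ }
    have hG₀mem : ∀ g : G, g ∈ G₀ ↔ μ g x₀ = x₀ := fun g => Iff.rfl
    let φ : G₀ →* G :=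
      { toFun := fun g => σ g.1 x₀
        map_one' := σone x₀
        map_mul' := by
          intro a b
          show σ (a.1 * b.1) x₀ = σ a.1 x₀ * σ b.1 x₀
          rw [σcoc, (hG₀mem b.1).mp b.2] }
    have hfin : Finite (G ⧸ G₀) := by
      apply Finite.of_injective (fun q : G ⧸ G₀ => μ q.out x₀)
      intro a b hab
      have hab' : μ a.out x₀ = μ b.out x₀ := hab
      have hmem : b.out⁻¹ * a.out ∈ G₀ := by
        rw [hG₀mem, μcomp, hab']
        exact μinv b.out x₀
      have h1 : ((b.out : G) : G ⧸ G₀) = (a.out : G ⧸ G₀) := QuotientGroup.eq.mpr hmem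
      rw [QuotientGroup.out_eq', QuotientGroup.out_eq'] at h1
      exact h1.symm
    refine ⟨G₀, φ, @Subgroup.index_ne_zero_of_finite _ _ _ hfin, ?_⟩
    intro N hN hNG₀ hNφ
    have htr' : ∀ x y : X, ∃ t : G, μ t x = y := by
      intro x y
      obtain ⟨t, ht⟩ := htr x y
      refine ⟨t, ?_⟩
      have h1 := key t x
      rw [ht] at h1
      simpa using h1.symm
    have hfix : ∀ n ∈ N, ∀ x : X, μ n x = x := by
      intro n hn x
      obtain ⟨t, ht⟩ := htr' x₀ x
      have hn' : t⁻¹ * n * t ∈ N := by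
        have := hN.conj_mem n hn t⁻¹
        simpa [mul_assoc] using this
      have h0 : μ (t⁻¹ * n * t) x₀ = x₀ := (hG₀mem _).mp (hNG₀ hn')
      have hrw : n * t = t * (t⁻¹ * n * t) := by group
      calc μ n x = μ n (μ t x₀) := by rw [ht]
        _ = μ (n * t) x₀ := (μcomp n t x₀).symm
        _ = μ (t * (t⁻¹ * n * t)) x₀ := by rw [hrw]
        _ = μ t (μ (t⁻¹ * n * t) x₀) := μcomp _ _ _
        _ = μ t x₀ := by rw [h0]
        _ = x := ht
    have hσinv : ∀ n ∈ N, ∀ x : X, σ n x ∈ N := by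
      intro n hn x
      obtain ⟨t, ht⟩ := htr' x₀ x
      have hinv1 : σ t⁻¹ x * σ t x₀ = 1 := by
        have h1 := σcoc t⁻¹ t x₀
        rw [inv_mul_cancel, σone, ht] at h1
        exact h1.symm
      have hinv2 : σ t⁻¹ x = (σ t x₀)⁻¹ := eq_inv_of_mul_eq_one_left hinv1
      have hn' : t⁻¹ * n * t ∈ N := by
        have := hN.conj_mem n hn t⁻¹
        simpa [mul_assoc] using this
      have hg₀ : t⁻¹ * n * t ∈ G₀ := hNG₀ hn'
      have hg₀' : μ (t⁻¹ * n * t) x₀ = x₀ := (hG₀mem _).mp hg₀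
      have hφ : σ (t⁻¹ * n * t) x₀ ∈ N := hNφ _ hg₀ hn'
      have hμt : μ t⁻¹ x = x₀ := by rw [← ht]; exact μinv t x₀
      have hxeq : n = t * (t⁻¹ * n * t) * t⁻¹ := by group
      have hcalc : σ n x = σ t x₀ * σ (t⁻¹ * n * t) x₀ * (σ t x₀)⁻¹ := by
        calc σ n x = σ (t * (t⁻¹ * n * t) * t⁻¹) x := by rw [← hxeq]
          _ = σ (t * (t⁻¹ * n * t)) (μ t⁻¹ x) * σ t⁻¹ x := σcoc _ _ _
          _ = σ t (μ (t⁻¹ * n * t) (μ t⁻¹ x)) * σ (t⁻¹ * n * t) (μ t⁻¹ x) * σ t⁻¹ x := by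
              rw [σcoc]
          _ = σ t x₀ * σ (t⁻¹ * n * t) x₀ * (σ t x₀)⁻¹ := by rw [hμt, hg₀', hinv2]
      rw [hcalc]
      have := hN.conj_mem _ hφ (σ t x₀)
      simpa [mul_assoc] using this
    have htriv : ∀ w : List X, ∀ n ∈ N, ρ n w = w := by
      intro w
      induction w with
      | nil => intro n hn; exact hnil n
      | cons x w ih =>
        intro n hn
        rw [hσμ n x, hfix n hn x, ih _ (hσinv n hn x)]
    intro n hn
    have hone : n = 1 := by
      apply hinj
      apply Equiv.ext
      intro w
      rw [htriv w n hn, map_one]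
      rfl
    rw [hone]
    exact Subgroup.one_mem _
  · -- Backward: an almost simple virtual endomorphism yields a self-similar structure.
    rintro ⟨G₀, φ, hidx, hAS⟩
    classical
    haveI := hZ
    -- a finite-index normal subgroup meeting the center trivially
    set S : Set G := {z : G | z ∈ Subgroup.center G ∧ z ≠ 1} with hS
    have hSfin : S.Finite := by
      apply Set.Finite.subset (Set.toFinite ((Subgroup.center G : Set G)))
      intro z hz
      exact hz.1
    haveI : Finite S := hSfin.to_subtype
    choose Nz hNz using fun z : S => hrf z.1 z.2.2
    set M : Subgroup G := ⨅ z : S, Nz z with hM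
    have hMnormal : M.Normal := by
      constructor
      intro n hn g
      rw [hM, Subgroup.mem_iInf] at *
      intro z
      exact (hNz z).1.conj_mem n (hn z) g
    have hMidx : M.index ≠ 0 := Subgroup.index_iInf_ne_zero fun z => (hNz z).2.1
    have hMZ : ∀ g ∈ M, g ∈ Subgroup.center G → g = 1 := by
      intro g hg hgZ
      by_contra hne
      have : g ∈ Nz ⟨g, hgZ, hne⟩ := Subgroup.mem_iInf.mp hg _
      exact (hNz _).2.2 this
    set H : Subgroup G := G₀ ⊓ M with hHdef
    have hHidx : H.index ≠ 0 := Subgroup.index_inf_ne_zero hidx hMidx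
    set ψ : H →* G := φ.comp (Subgroup.inclusion inf_le_left) with hψ
    set ρ := treePerm H ψ with hρ
    -- the kernel of the action is trivial
    set K := MonoidHom.ker ρ with hK
    have hKH : ∀ g ∈ K, g ∈ H := by
      intro g hg
      have h1 : ρ g [((1 : G) : G ⧸ H)] = [((1 : G) : G ⧸ H)] := by
        rw [MonoidHom.mem_ker.mp hg]; rfl
      have h2 : ρ g [((1 : G) : G ⧸ H)] = [((g : G) : G ⧸ H)] := by
        rw [hρ, treePerm_apply, actAux_cons, actAux_nil, smul_mk_aux, mul_one]
      rw [h2] at h1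
      have h3 : ((g : G) : G ⧸ H) = ((1 : G) : G ⧸ H) := by simpa using h1
      have := QuotientGroup.eq.mp h3
      simpa using this
    have hsmul_one : ∀ g ∈ H, g • ((1 : G) : G ⧸ H) = ((1 : G) : G ⧸ H) := by
      intro g hg
      rw [smul_mk_aux, mul_one]
      exact (QuotientGroup.eq.mpr (by simpa using Subgroup.inv_mem H hg)).symm
    have hsec1 : ∀ g ∈ H, secAux H g ((1 : G) : G ⧸ H) = g := by
      intro g hg
      rw [secAux, hsmul_one g hg, repAux_one]
      group
    have hKsec : ∀ (g : G) (hg : g ∈ K), ψ ⟨g, hKH g hg⟩ ∈ K := by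
      intro g hg
      have hgH := hKH g hg
      rw [MonoidHom.mem_ker]
      apply Equiv.ext
      intro w
      have h1 : ρ g (((1 : G) : G ⧸ H) :: w) = ((1 : G) : G ⧸ H) :: w := by
        rw [MonoidHom.mem_ker.mp hg]; rfl
      have h2 : ρ g (((1 : G) : G ⧸ H) :: w) =
          (g • ((1 : G) : G ⧸ H)) :: actAux H ψ (ψ ⟨g, hgH⟩) w := by
        rw [hρ, treePerm_apply, actAux_cons]
        have heq : (⟨secAux H g ((1 : G) : G ⧸ H), secAux_mem H g ((1 : G) : G ⧸ H)⟩ : H) =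
            ⟨g, hgH⟩ := Subtype.ext (hsec1 g hgH)
        rw [heq]
      rw [h2, hsmul_one g hgH] at h1
      have h3 : actAux H ψ (ψ ⟨g, hgH⟩) w = w := by
        exact List.cons.inj h1 |>.2
      rw [hρ, treePerm_apply]
      exact h3
    have hKbot : K = ⊥ := by
      have hKcenter : K ≤ Subgroup.center G := by
        refine hAS K (MonoidHom.normal_ker ρ) (fun g hg => (hKH g hg).1) ?_
        intro g hgG₀ hgK
        exact hKsec g hgK
      rw [eq_bot_iff]
      intro g hg
      have h1 : g = 1 := hMZ g (hKH g hg).2 (hKcenter hg)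
      rw [h1]
      exact Subgroup.one_mem _
    have hρinj : Function.Injective ρ := by
      rw [← MonoidHom.ker_eq_bot_iff]
      exact hKbot
    -- transport to an alphabet in `Type 0`
    haveI : H.FiniteIndex := ⟨hHidx⟩
    set d := H.index with hd
    have hcardQ : Nat.card (G ⧸ H) ≠ 0 := hHidx
    let e : (G ⧸ H) ≃ Fin (Nat.card (G ⧸ H)) := Nat.equivFinOfCardPos hcardQ
    let le : List (G ⧸ H) ≃ List (Fin (Nat.card (G ⧸ H))) :=
      { toFun := List.map e
        invFun := List.map e.symm
        left_inv := fun l => by simp [List.map_map]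
        right_inv := fun l => by simp [List.map_map] }
    let pc : Equiv.Perm (List (G ⧸ H)) →* Equiv.Perm (List (Fin (Nat.card (G ⧸ H)))) :=
      { toFun := fun p => le.permCongr p
        map_one' := by ext l; simp
        map_mul' := fun p q => by ext l; simp [Equiv.permCongr_apply] }
    refine ⟨d, Nat.one_le_iff_ne_zero.mpr hHidx, Fin (Nat.card (G ⧸ H)), inferInstance,
      by rw [Nat.card_eq_fintype_card, Fintype.card_fin]; rfl, pc.comp ρ, ?_, ⟨?_, ?_⟩, ?_⟩
    · -- injectivity
      intro a b hab
      apply hρinj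
      exact le.permCongr.injective hab
    · -- fixes the root
      intro g
      rfl
    · -- self-similarity
      intro g x
      refine ⟨ψ ⟨secAux H g (e.symm x), secAux_mem H g (e.symm x)⟩, e (g • e.symm x), ?_⟩
      intro w
      show le.permCongr (ρ g) (x :: w) = _
      rw [Equiv.permCongr_apply]
      show List.map e (ρ g (List.map e.symm (x :: w))) = _
      rw [List.map_cons, hρ, treePerm_apply, actAux_cons, List.map_cons]
      show _ = e (g • e.symm x) :: le.permCongr (ρ _) w
      rw [Equiv.permCongr_apply]
      rfl
    · -- first-level transitivity
      intro x y
      refine ⟨repAux H (e.symm y) * (repAux H (e.symm x))⁻¹, ?_⟩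
      have hsm : (repAux H (e.symm y) * (repAux H (e.symm x))⁻¹) • e.symm x = e.symm y := by
        have h1 : (repAux H (e.symm y) * (repAux H (e.symm x))⁻¹) •
            (QuotientGroup.mk (repAux H (e.symm x)) : G ⧸ H) =
            QuotientGroup.mk (repAux H (e.symm y)) := by
          rw [smul_mk_aux]
          congr 1
          group
        rw [repAux_spec, repAux_spec] at h1
        exact h1
      show le.permCongr (ρ _) [x] = [y]
      rw [Equiv.permCongr_apply]
      show List.map e (ρ _ [e.symm x]) = [y]
      rw [hρ, treePerm_apply, actAux_cons, actAux_nil, hsm]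
      simp
end

section
/- Let p be a prime, n ≥ 2 and m ≥ 1, and let H₀ be the principal congruence subgroup of level m in SL(n, ℤ_p), i.e. the subgroup of matrices g ∈ SL(n, ℤ_p) such that every entry of g − I lies in p^m ℤ_p. If N is a subgroup of H₀ which is normal in H₀ and every element of N is a diagonal matrix, then every element of N is a scalar matrix. -/
/-- Let `H₀` be the principal congruence subgroup of level `m ≥ 1` in `SL(n, ℤ_p)`,
`n ≥ 2`. If `N` is a subgroup of `H₀`, normal in `H₀`, all of whose elements are
diagonal matrices, then every element of `N` is a scalar matrix. -/
theorem diagonal_normal_subgroup_is_scalar (p : ℕ) [Fact p.Prime] (n m : ℕ)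
    (hn : 2 ≤ n) (hm : 1 ≤ m)
    (H₀ : Subgroup (Matrix.SpecialLinearGroup (Fin n) ℤ_[p]))
    (hH₀ : ∀ g : Matrix.SpecialLinearGroup (Fin n) ℤ_[p],
      g ∈ H₀ ↔ ∀ i j, (p : ℤ_[p]) ^ m ∣ ((g : Matrix (Fin n) (Fin n) ℤ_[p]) - 1) i j)
    (N : Subgroup (Matrix.SpecialLinearGroup (Fin n) ℤ_[p]))
    (hNH : N ≤ H₀)
    (hNormal : ∀ x ∈ N, ∀ h ∈ H₀, h * x * h⁻¹ ∈ N)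
    (hdiag : ∀ g ∈ N, ∀ i j : Fin n, i ≠ j → (g : Matrix (Fin n) (Fin n) ℤ_[p]) i j = 0) :
    ∀ g ∈ N, ∃ c : ℤ_[p], (g : Matrix (Fin n) (Fin n) ℤ_[p]) = c • (1 : Matrix (Fin n) (Fin n) ℤ_[p]) := by
  intro g hg
  set t : ℤ_[p] := (p : ℤ_[p]) ^ m with ht
  have htne : t ≠ 0 := by
    apply pow_ne_zero
    exact_mod_cast (Fact.out : p.Prime).ne_zero
  -- key: for any i ≠ j, the diagonal entries agree
  have key : ∀ i j : Fin n, i ≠ j →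
      (g : Matrix (Fin n) (Fin n) ℤ_[p]) i i = (g : Matrix (Fin n) (Fin n) ℤ_[p]) j j := by
    intro i j hij
    set h : Matrix.SpecialLinearGroup (Fin n) ℤ_[p] :=
      ⟨Matrix.transvection i j t, by simp [Matrix.det_transvection_of_ne i j hij]⟩ with hdefh
    have hH : h ∈ H₀ := by
      rw [hH₀]
      intro a b
      simp only [hdefh, Matrix.transvection, add_sub_cancel_left, Matrix.single,
        Matrix.of_apply]
      split <;> simp
    have hk : h * g * h⁻¹ ∈ N := hNormal g hg h hH
    set k := h * g * h⁻¹ with hdefk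
    have hmul : (h : Matrix (Fin n) (Fin n) ℤ_[p]) * g = (k : Matrix (Fin n) (Fin n) ℤ_[p]) * h := by
      have : h * g = k * h := by
        rw [hdefk]; group
      calc (h : Matrix (Fin n) (Fin n) ℤ_[p]) * g = ((h * g : Matrix.SpecialLinearGroup (Fin n) ℤ_[p]) : Matrix (Fin n) (Fin n) ℤ_[p]) := by simp
        _ = ((k * h : Matrix.SpecialLinearGroup (Fin n) ℤ_[p]) : Matrix (Fin n) (Fin n) ℤ_[p]) := by rw [this]
        _ = (k : Matrix (Fin n) (Fin n) ℤ_[p]) * h := by simp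
    have hgji : (g : Matrix (Fin n) (Fin n) ℤ_[p]) j i = 0 := hdiag g hg j i (Ne.symm hij)
    have hkij : (k : Matrix (Fin n) (Fin n) ℤ_[p]) i j = 0 := hdiag k hk i j hij
    have hgij : (g : Matrix (Fin n) (Fin n) ℤ_[p]) i j = 0 := hdiag g hg i j hij
    have e1 : (g : Matrix (Fin n) (Fin n) ℤ_[p]) i i = (k : Matrix (Fin n) (Fin n) ℤ_[p]) i i := by
      have := congrFun (congrFun hmul i) i
      simpa [hdefh, Matrix.transvection, Matrix.add_mul, Matrix.mul_add, hij, hgji] using this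
    have e2 : t * (g : Matrix (Fin n) (Fin n) ℤ_[p]) j j
        = (k : Matrix (Fin n) (Fin n) ℤ_[p]) i i * t := by
      have := congrFun (congrFun hmul i) j
      simpa [hdefh, Matrix.transvection, Matrix.add_mul, Matrix.mul_add, hij, hgij, hkij] using this
    rw [e1]
    apply mul_left_cancel₀ htne
    rw [e2, mul_comm]
  -- conclude: all diagonal entries equal the first one
  have h0 : (0 : ℕ) < n := by omega
  refine ⟨(g : Matrix (Fin n) (Fin n) ℤ_[p]) ⟨0, h0⟩ ⟨0, h0⟩, ?_⟩
  ext a b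
  by_cases hab : a = b
  · subst hab
    rw [Matrix.smul_apply, Matrix.one_apply_eq, smul_eq_mul, mul_one]
    by_cases ha : a = ⟨0, h0⟩
    · rw [ha]
    · exact key a ⟨0, h0⟩ ha
  · rw [hdiag g hg a b hab, Matrix.smul_apply, Matrix.one_apply_ne hab, smul_eq_mul, mul_zero]
end
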